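/- arXiv:1110.6051 — 3 statements merged into one kernel-verified Lean document; each statement's English description precedes it below -/
import Mathlib

section
/- If the valid on/off assignment to the switch nodes corresponds to a solution of the 3-partition instance (exactly one 'on' per row, three 'on' per column, with the three row-values in each column summing to s/m), then the flow into the output node equals s = Σ_i s_i, and this is the maximal possible output. -/
/-- If the valid on/off assignment to the switch nodes corresponds
to a solution of the 3-partition instance (exactly one on-switch per row, three
per column, with the three row-values in each column summing to `s/m`), then
the flow into the output node equals `s = Σ_i s_i`, and this is the maximal
possible output.

An on-switch `(i,j)` consumes the full row input `s i` and contributes `s i`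
to the output, so the output of an assignment `σ` is
`Σ_i Σ_j (if σ i j then s i else 0)`.  Validity of an assignment means at most
one on-switch per row (Statement 3). -/
theorem switch_lattice_solution_gives_max_output
    (m : ℕ) (hm : 0 < m)
    (s : Fin (3 * m) → ℕ) (hpos : ∀ i, 0 < s i)
    (hdvd : m ∣ ∑ i, s i)
    (hbound : ∀ i, ((∑ k, s k : ℕ) : ℚ) / (4 * m) < (s i : ℚ)
      ∧ ((s i : ℕ) : ℚ) < ((∑ k, s k : ℕ) : ℚ) / (2 * m))
    (σ : Fin (3 * m) → Fin m → Bool)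
    (hrow : ∀ i, ∃! j, σ i j = true)
    (hcolcard : ∀ j, (Finset.univ.filter (fun i => σ i j = true)).card = 3)
    (hcolsum : ∀ j, ∑ i ∈ Finset.univ.filter (fun i => σ i j = true), s i
      = (∑ i, s i) / m) :
    (∑ i, ∑ j, (if σ i j then s i else 0)) = ∑ i, s i
    ∧ ∀ σ' : Fin (3 * m) → Fin m → Bool,
        (∀ i j k, σ' i j = true → σ' i k = true → j = k) →
        (∑ i, ∑ j, (if σ' i j then s i else 0)) ≤ ∑ i, s i := by
  constructor
  · refine Finset.sum_congr rfl fun i _ => ?_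
    obtain ⟨j, hj, huniq⟩ := hrow i
    rw [Finset.sum_eq_single j]
    · simp [hj]
    · intro k _ hk
      simp only [ite_eq_right_iff]
      intro hkt
      exact absurd (huniq k hkt) hk
    · simp
  · intro σ' hval
    refine Finset.sum_le_sum fun i _ => ?_
    by_cases h : ∃ j, σ' i j = true
    · obtain ⟨j, hj⟩ := h
      rw [Finset.sum_eq_single j]
      · simp [hj]
      · intro k _ hk
        simp only [ite_eq_right_iff]
        intro hkt
        exact absurd (hval i k j hkt hj) hk
      · simp
    · push_neg at h
      simp only [Bool.not_eq_true] at h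
      simp [h]
end

section
/- Conversely, if there exists a valid on/off assignment to the switch nodes of the lattice network such that the output node receives the maximal value s = Σ_i s_i, then the 3-partition instance has a solution: the columns containing on-switches partition the indices {1,…,3m} into m triples each summing to s/m. -/
/-!
A row contributes to the output at most once, so output `∑ i, s i` forces every row to
switch on exactly once. The columns then carry the whole flow `∑ i, s i` while each may carry
at most `(∑ i, s i) / m`, so each carries exactly that much. Finally a column load of `q` made of
items lying strictly between `q/4` and `q/2` must consist of exactly three items.
-/

open Finset

section Switches

variable {κ : Type*} [Fintype κ] {p : κ → Prop} [DecidablePred p]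

theorem sum_ite_le_of_subsingleton (hp : ∀ j k, p j → p k → j = k) (a : ℕ) :
    ∑ j, (if p j then a else 0) ≤ a := by
  rw [← sum_filter, sum_const, smul_eq_mul]
  have hcard : #(univ.filter p) ≤ 1 :=
    card_le_one.mpr fun j hj k hk => hp j k (mem_filter.mp hj).2 (mem_filter.mp hk).2
  simpa using Nat.mul_le_mul_right a hcard

theorem existsUnique_of_sum_ite_eq (hp : ∀ j k, p j → p k → j = k) {a : ℕ} (ha : 0 < a)
    (hsum : ∑ j, (if p j then a else 0) = a) : ∃! j, p j := by
  obtain ⟨j, -, hj⟩ := exists_ne_zero_of_sum_ne_zero (hsum.trans_ne ha.ne')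
  have hpj : p j := by_contra fun h => hj (if_neg h)
  exact ⟨j, hpj, fun k hk => hp k j hk hpj⟩

end Switches

section Columns

variable {m T : ℕ} {f : Fin m → ℕ}

theorem mul_div_eq_of_sum_eq_of_le_div (hle : ∀ j, f j ≤ T / m) (hsum : ∑ j, f j = T) :
    m * (T / m) = T := by
  refine le_antisymm (Nat.mul_div_le T m) ?_
  calc T = ∑ j, f j := hsum.symm
    _ ≤ ∑ _j : Fin m, T / m := sum_le_sum fun j _ => hle j
    _ = m * (T / m) := by simp

theorem eq_div_of_sum_eq_of_le_div (hle : ∀ j, f j ≤ T / m) (hsum : ∑ j, f j = T) (j : Fin m) :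
    f j = T / m := by
  refine (sum_eq_sum_iff_of_le fun j _ => hle j).mp ?_ j (mem_univ j)
  simpa [mul_div_eq_of_sum_eq_of_le_div hle hsum] using hsum

end Columns

theorem card_eq_three_of_sum_eq {ι K : Type*} [Field K] [LinearOrder K] [IsStrictOrderedRing K]
    {F : Finset ι} {f : ι → K} {q : K} (hq : 0 < q)
    (hf : ∀ i ∈ F, q / 4 < f i ∧ f i < q / 2) (hsum : ∑ i ∈ F, f i = q) : #F = 3 := by
  have hne : F.Nonempty := by
    by_contra h
    rw [not_nonempty_iff_eq_empty.mp h, sum_empty] at hsum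
    exact hq.ne hsum
  have hlow : #F * (q / 4) < q := by
    simpa [hsum] using sum_lt_sum_of_nonempty hne fun i hi => (hf i hi).1
  have hhigh : q < #F * (q / 2) := by
    simpa [hsum] using sum_lt_sum_of_nonempty hne fun i hi => (hf i hi).2
  have hlt4 : (#F : K) < 4 := by nlinarith
  have hgt2 : (2 : K) < #F := by nlinarith
  have : #F < 4 := by exact_mod_cast hlt4
  have : 2 < #F := by exact_mod_cast hgt2
  omega

theorem switch_lattice_max_output_gives_partition_general
    (m : ℕ)
    (s : Fin (3 * m) → ℕ)
    (hbound : ∀ i, ((∑ k, s k : ℕ) : ℚ) / (4 * m) < (s i : ℚ)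
      ∧ ((s i : ℕ) : ℚ) < ((∑ k, s k : ℕ) : ℚ) / (2 * m))
    (σ : Fin (3 * m) → Fin m → Bool)
    (hrow : ∀ i j k, σ i j = true → σ i k = true → j = k)
    (hcolcap : ∀ j, ∑ i ∈ Finset.univ.filter (fun i => σ i j = true), s i
      ≤ (∑ i, s i) / m)
    (hmax : (∑ i, ∑ j, (if σ i j then s i else 0)) = ∑ i, s i) :
    (∀ i, ∃! j, σ i j = true)
    ∧ ∀ j, (Finset.univ.filter (fun i => σ i j = true)).card = 3
      ∧ ∑ i ∈ Finset.univ.filter (fun i => σ i j = true), s i = (∑ i, s i) / m := by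
  set T := ∑ i, s i
  have hs_pos (i) : 0 < s i := by
    exact_mod_cast (by positivity : (0 : ℚ) ≤ T / (4 * m)).trans_lt (hbound i).1
  have hrows : ∀ i ∈ univ, ∑ j, (if σ i j then s i else 0) = s i :=
    (sum_eq_sum_iff_of_le fun i _ => sum_ite_le_of_subsingleton (hrow i) (s i)).mp hmax
  have hcols : ∑ j, ∑ i ∈ univ.filter (fun i => σ i j = true), s i = T := by
    simp_rw [sum_filter]
    rw [sum_comm, hmax]
  have hcol := eq_div_of_sum_eq_of_le_div hcolcap hcols
  refine ⟨fun i => existsUnique_of_sum_ite_eq (hrow i) (hs_pos i) (hrows i (mem_univ i)),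
    fun j => ⟨?_, hcol j⟩⟩
  have hm : 0 < m := j.pos
  have hT : 0 < T := sum_pos (fun i _ => hs_pos i) ⟨⟨0, by omega⟩, mem_univ _⟩
  refine card_eq_three_of_sum_eq (f := fun i => (s i : ℚ)) (q := T / m) (by positivity)
    (fun i _ => ?_) ?_
  · rw [div_div, div_div, mul_comm _ (4 : ℚ), mul_comm _ (2 : ℚ)]
    exact hbound i
  · rw [← Nat.cast_sum, hcol j, Nat.cast_div_charZero]
    exact Dvd.intro _ (mul_div_eq_of_sum_eq_of_le_div hcolcap hcols)

/-- Conversely, if there exists a valid on/off assignment to the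
switch nodes of the lattice network such that the output node receives the
maximal value `s = Σ_i s_i`, then the 3-partition instance has a solution: the
columns containing on-switches partition the indices `{1,…,3m}` into `m`
triples each summing to `s/m`.

Validity of `σ`: at most one on-switch per row (an on-switch consumes the full
horizontal flow `s i`), and in each column the total vertical consumption
cannot exceed the top influx `s/m` (vertical flows stay nonnegative).  The
output is `Σ_i Σ_j (if σ i j then s i else 0)`. -/
theorem switch_lattice_max_output_gives_partition
    (m : ℕ) (hm : 0 < m)
    (s : Fin (3 * m) → ℕ) (hpos : ∀ i, 0 < s i)
    (hdvd : m ∣ ∑ i, s i)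
    (hbound : ∀ i, ((∑ k, s k : ℕ) : ℚ) / (4 * m) < (s i : ℚ)
      ∧ ((s i : ℕ) : ℚ) < ((∑ k, s k : ℕ) : ℚ) / (2 * m))
    (σ : Fin (3 * m) → Fin m → Bool)
    (hrow : ∀ i j k, σ i j = true → σ i k = true → j = k)
    (hcolcap : ∀ j, ∑ i ∈ Finset.univ.filter (fun i => σ i j = true), s i
      ≤ (∑ i, s i) / m)
    (hmax : (∑ i, ∑ j, (if σ i j then s i else 0)) = ∑ i, s i) :
    (∀ i, ∃! j, σ i j = true)
    ∧ ∀ j, (Finset.univ.filter (fun i => σ i j = true)).card = 3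
      ∧ ∑ i ∈ Finset.univ.filter (fun i => σ i j = true), s i = (∑ i, s i) / m :=
  switch_lattice_max_output_gives_partition_general m s hbound σ hrow hcolcap hmax
end

section
/- The four-reaction switch implementation s_i Q_i → W_i, s_i Z_j → V_{ij}, V_{ij} + W_i → X_{ij}, X_{ij} → s_i O admits exactly two integer flows when the available supply of Q_i is at most s_i copies: the zero flow (off) and the flow with value 1 on each reaction (on), which consumes s_i copies of Q_i, s_i copies of Z_j, and produces s_i copies of O. -/
/-- Validity of a flow `f` on the four reactions
`r₁ : sᵢ Qᵢ → Wᵢ`, `r₂ : sᵢ Z_j → V_{ij}`, `r₃ : V_{ij} + Wᵢ → X_{ij}`,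
`r₄ : X_{ij} → sᵢ O`: conservation of `Wᵢ` (`f 0 = f 2`), of `V_{ij}`
(`f 1 = f 2`), of `X_{ij}` (`f 2 = f 3`), and the `Qᵢ`-supply constraint
(consumption `sᵢ · f 0` is at most `sᵢ`). -/
def SwitchFlowValid (si : ℕ) (f : Fin 4 → ℕ) : Prop :=
  f 0 = f 2 ∧ f 1 = f 2 ∧ f 2 = f 3 ∧ si * f 0 ≤ si

/-- The four-reaction switch implementation admits exactly two
integer flows when the supply of `Qᵢ` is at most `sᵢ` copies: the zero flow
(off) and the all-ones flow (on); the on-flow consumes `sᵢ` copies of `Qᵢ`,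
`sᵢ` copies of `Z_j`, and produces `sᵢ` copies of `O`. -/
theorem switch_node_exactly_two_flows (si : ℕ) (hsi : 1 ≤ si) :
    (∀ f : Fin 4 → ℕ,
      SwitchFlowValid si f ↔ (f = fun _ => 0) ∨ (f = fun _ => 1))
    ∧ si * 1 = si := by
  refine ⟨fun f => ⟨fun ⟨h02, h12, h23, hle⟩ => ?_, fun h => ?_⟩, mul_one si⟩
  · have hf0 : f 0 ≤ 1 := by
      by_contra h
      push_neg at h
      have := Nat.mul_le_mul_left si (Nat.succ_le_of_lt h)
      omega
    interval_cases h : f 0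
    · left
      have h2 : f 2 = 0 := h02.symm
      have h1 : f 1 = 0 := h12.trans h2
      have h3 : f 3 = 0 := h23.symm.trans h2
      funext i
      fin_cases i
      exacts [h, h1, h2, h3]
    · right
      have h2 : f 2 = 1 := h02.symm
      have h1 : f 1 = 1 := h12.trans h2
      have h3 : f 3 = 1 := h23.symm.trans h2
      funext i
      fin_cases i
      exacts [h, h1, h2, h3]
  · rcases h with h | h <;> subst h <;>
      exact ⟨rfl, rfl, rfl, by simp⟩
end
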